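/- arXiv:2311.15670 — 3 statements merged into one kernel-verified Lean document; each statement's English description precedes it below -/
import Mathlib

section
/- If P2 ∈ SBrSNNI and L ⊆ A_H, then P1'∖A_H ≈_b ((P2' ∥_L Q)/L)∖A_H for every process Q all of whose reachable processes perform only actions in A_H, and for all P1' ∈ reach(P1) and P2' ∈ reach(P2) such that P1'∖A_H ≈_b P2'/A_H. -/
namespace SecurityNI

/-- Process terms: `0`, action prefix (`none` = τ, `some a` = observable action),
choice, CSP-style parallel composition with synchronization set, restriction,
hiding, and constants (whose defining equations are given by an environment). -/
inductive Proc (A : Type) (C : Type) : Type where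
  | nil : Proc A C
  | pre : Option A → Proc A C → Proc A C
  | choice : Proc A C → Proc A C → Proc A C
  | par : Set A → Proc A C → Proc A C → Proc A C
  | restrict : Proc A C → Set A → Proc A C
  | hide : Proc A C → Set A → Proc A C
  | const : C → Proc A C

variable {A C : Type}

/-- A process term is guarded when every constant occurrence is in the scope
of an action prefix operator. -/
def Guarded : Proc A C → Prop
  | .nil => True
  | .pre _ _ => True
  | .choice p q => Guarded p ∧ Guarded q
  | .par _ p q => Guarded p ∧ Guarded q
  | .restrict p _ => Guarded p
  | .hide p _ => Guarded p
  | .const _ => False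

/-- Operational semantics, parameterized by the defining equations `env` of
the constants.  Labels are `Option A`, with `none` playing the role of τ. -/
inductive Trans (env : C → Proc A C) : Proc A C → Option A → Proc A C → Prop where
  | pre (a : Option A) (p : Proc A C) : Trans env (.pre a p) a p
  | choiceL {p q a p'} (h : Trans env p a p') : Trans env (.choice p q) a p'
  | choiceR {p q a q'} (h : Trans env q a q') : Trans env (.choice p q) a q'
  | parL {L p q a p'} (h : Trans env p a p') (hn : ∀ x, a = some x → x ∉ L) :
      Trans env (.par L p q) a (.par L p' q)
  | parR {L p q a q'} (h : Trans env q a q') (hn : ∀ x, a = some x → x ∉ L) :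
      Trans env (.par L p q) a (.par L p q')
  | sync {L p q x p' q'} (h1 : Trans env p (some x) p') (h2 : Trans env q (some x) q')
      (hx : x ∈ L) : Trans env (.par L p q) (some x) (.par L p' q')
  | res {p a p' L} (h : Trans env p a p') (hn : ∀ x, a = some x → x ∉ L) :
      Trans env (.restrict p L) a (.restrict p' L)
  | hideIn {p x p' L} (h : Trans env p (some x) p') (hx : x ∈ L) :
      Trans env (.hide p L) none (.hide p' L)
  | hideOut {p a p' L} (h : Trans env p a p') (hn : ∀ x, a = some x → x ∉ L) :
      Trans env (.hide p L) a (.hide p' L)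
  | const {c a p'} (h : Trans env (env c) a p') : Trans env (.const c) a p'

section LTS

variable {S : Type} (tr : S → Option A → S → Prop)

/-- Finitely many (possibly zero) τ-transitions. -/
def TauStar : S → S → Prop :=
  Relation.ReflTransGen (fun s s' => tr s none s')

/-- `B` is a branching bisimulation. -/
def IsBranchingBisim (B : S → S → Prop) : Prop :=
  Symmetric B ∧
    ∀ s1 s2, B s1 s2 → ∀ a s1', tr s1 a s1' →
      (a = none ∧ B s1' s2) ∨
      (∃ s2b s2', TauStar tr s2 s2b ∧ tr s2b a s2' ∧ B s1 s2b ∧ B s1' s2')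

/-- Branching bisimilarity `≈_b`. -/
def BrBisim (s1 s2 : S) : Prop :=
  ∃ B, IsBranchingBisim tr B ∧ B s1 s2

/-- `B` is a weak bisimulation. -/
def IsWeakBisim (B : S → S → Prop) : Prop :=
  Symmetric B ∧
    ∀ s1 s2, B s1 s2 →
      (∀ s1', tr s1 none s1' → ∃ s2', TauStar tr s2 s2' ∧ B s1' s2') ∧
      (∀ x s1', tr s1 (some x) s1' →
        ∃ t t' s2', TauStar tr s2 t ∧ tr t (some x) t' ∧ TauStar tr t' s2' ∧ B s1' s2')

/-- Weak bisimilarity `≈`. -/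
def WeakBisim (s1 s2 : S) : Prop :=
  ∃ B, IsWeakBisim tr B ∧ B s1 s2

/-- Reachability via finitely many transitions. -/
def Reach : S → S → Prop :=
  Relation.ReflTransGen (fun s s' => ∃ a, tr s a s')

end LTS

section Security

variable (env : C → Proc A C) (AH : Set A)

/-- `P ∈ BrSNNI` iff `P∖A_H ≈_b P/A_H`. -/
def BrSNNI (p : Proc A C) : Prop :=
  BrBisim (Trans env) (.restrict p AH) (.hide p AH)

/-- All processes reachable from `q` perform only actions in `AH`. -/
def HighOnly (q : Proc A C) : Prop :=
  ∀ q', Reach (Trans env) q q' → ∀ a q'', Trans env q' a q'' → ∃ h ∈ AH, a = some h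

/-- `P ∈ BrNDC` iff `P∖A_H ≈_b ((P ∥_L Q)/L)∖A_H` for every high-level `Q`
and every `L ⊆ A_H`. -/
def BrNDC (p : Proc A C) : Prop :=
  ∀ q, HighOnly env AH q → ∀ L, L ⊆ AH →
    BrBisim (Trans env) (.restrict p AH) (.restrict (.hide (.par L p q) L) AH)

/-- `P ∈ SBrSNNI` iff every reachable process is BrSNNI. -/
def SBrSNNI (p : Proc A C) : Prop :=
  ∀ p', Reach (Trans env) p p' → BrSNNI env AH p'

/-- `P ∈ P_BrNDC` iff every reachable process is BrNDC. -/
def PBrNDC (p : Proc A C) : Prop :=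
  ∀ p', Reach (Trans env) p p' → BrNDC env AH p'

/-- `P ∈ SBrNDC` iff for every reachable `P'` and every high transition
`P' --h→ P''`, `P'∖A_H ≈_b P''∖A_H`. -/
def SBrNDC (p : Proc A C) : Prop :=
  ∀ p' p'', Reach (Trans env) p p' → ∀ h ∈ AH, Trans env p' (some h) p'' →
    BrBisim (Trans env) (.restrict p' AH) (.restrict p'' AH)

/-- `P ∈ BSNNI` iff `P∖A_H ≈ P/A_H`. -/
def BSNNI (p : Proc A C) : Prop :=
  WeakBisim (Trans env) (.restrict p AH) (.hide p AH)

/-- `P ∈ BNDC` iff `P∖A_H ≈ ((P ∥_L Q)/L)∖A_H` for every high-level `Q`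
and every `L ⊆ A_H`. -/
def BNDC (p : Proc A C) : Prop :=
  ∀ q, HighOnly env AH q → ∀ L, L ⊆ AH →
    WeakBisim (Trans env) (.restrict p AH) (.restrict (.hide (.par L p q) L) AH)

/-- `P ∈ SBSNNI` iff every reachable process is BSNNI. -/
def SBSNNI (p : Proc A C) : Prop :=
  ∀ p', Reach (Trans env) p p' → BSNNI env AH p'

/-- `P ∈ P_BNDC` iff every reachable process is BNDC. -/
def PBNDC (p : Proc A C) : Prop :=
  ∀ p', Reach (Trans env) p p' → BNDC env AH p'

/-- `P ∈ SBNDC` iff for every reachable `P'` and every high transition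
`P' --h→ P''`, `P'∖A_H ≈ P''∖A_H`. -/
def SBNDC (p : Proc A C) : Prop :=
  ∀ p' p'', Reach (Trans env) p p' → ∀ h ∈ AH, Trans env p' (some h) p'' →
    WeakBisim (Trans env) (.restrict p' AH) (.restrict p'' AH)

/-- No high-level actions occur in `p`: no process reachable from `p`
can perform a high-level action. -/
def NoHigh (p : Proc A C) : Prop :=
  ∀ p', Reach (Trans env) p p' → ∀ h ∈ AH, ∀ p'', ¬ Trans env p' (some h) p''

end Security

section BBTheory

variable {A S : Type} (tr : S → Option A → S → Prop)

/-- Semi-branching bisimulation (Basten). -/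
def IsSemiBB (B : S → S → Prop) : Prop :=
  Symmetric B ∧ ∀ s1 s2, B s1 s2 → ∀ a s1', tr s1 a s1' →
    ∃ s2b, TauStar tr s2 s2b ∧ B s1 s2b ∧
      ((a = none ∧ B s1' s2b) ∨ ∃ s2', tr s2b a s2' ∧ B s1' s2')

/-- Semi-branching bisimilarity. -/
def SBB (s t : S) : Prop := ∃ B, IsSemiBB tr B ∧ B s t

variable {tr}

theorem isSemiBB_of_branching {B} (h : IsBranchingBisim tr B) : IsSemiBB tr B := by
  refine ⟨h.1, fun s1 s2 hb a s1' ht => ?_⟩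
  rcases h.2 s1 s2 hb a s1' ht with ⟨ha, hb'⟩ | ⟨s2b, s2', h1', h2', h3', h4'⟩
  · exact ⟨s2, Relation.ReflTransGen.refl, hb, Or.inl ⟨ha, hb'⟩⟩
  · exact ⟨s2b, h1', h3', Or.inr ⟨s2', h2', h4'⟩⟩

theorem isSemiBB_sbb : IsSemiBB tr (SBB tr) := by
  constructor
  · rintro x y ⟨B, hB, hxy⟩; exact ⟨B, hB, hB.1 hxy⟩
  · rintro s1 s2 ⟨B, hB, hb⟩ a s1' ht
    obtain ⟨s2b, h1, h2, h3⟩ := hB.2 s1 s2 hb a s1' ht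
    refine ⟨s2b, h1, ⟨B, hB, h2⟩, ?_⟩
    rcases h3 with ⟨ha, hb'⟩ | ⟨s2', ht', hb'⟩
    · exact Or.inl ⟨ha, B, hB, hb'⟩
    · exact Or.inr ⟨s2', ht', B, hB, hb'⟩

theorem sbb_refl (s : S) : SBB tr s s := by
  refine ⟨Eq, ⟨fun _ _ h => h.symm, ?_⟩, rfl⟩
  rintro s1 _ rfl a s1' ht
  exact ⟨s1, Relation.ReflTransGen.refl, rfl, Or.inr ⟨s1', ht, rfl⟩⟩

theorem sbb_symm {s t : S} (h : SBB tr s t) : SBB tr t s := isSemiBB_sbb.1 h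

theorem semibb_tau {B} (hB : IsSemiBB tr B) {s s'} (h : TauStar tr s s') :
    ∀ t, B s t → ∃ t', TauStar tr t t' ∧ B s' t' := by
  induction h using Relation.ReflTransGen.head_induction_on with
  | refl => exact fun t hb => ⟨t, Relation.ReflTransGen.refl, hb⟩
  | head hst _ ih =>
    intro t hb
    obtain ⟨u, htu, _, hrest⟩ := hB.2 _ _ hb none _ hst
    rcases hrest with ⟨_, hb'⟩ | ⟨u', hu', hb'⟩
    · obtain ⟨t', h1', h2'⟩ := ih u hb'
      exact ⟨t', Relation.ReflTransGen.trans htu h1', h2'⟩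
    · obtain ⟨t', h1', h2'⟩ := ih u' hb'
      exact ⟨t', Relation.ReflTransGen.trans (Relation.ReflTransGen.tail htu hu') h1', h2'⟩

theorem semibb_comp {B1 B2 : S → S → Prop} (h1 : IsSemiBB tr B1) (h2 : IsSemiBB tr B2) :
    ∀ s1 t s2, B1 s1 t → B2 t s2 → ∀ a s1', tr s1 a s1' →
      ∃ s2b, TauStar tr s2 s2b ∧ (∃ u, B1 s1 u ∧ B2 u s2b) ∧
        ((a = none ∧ ∃ u, B1 s1' u ∧ B2 u s2b) ∨
         ∃ s2', tr s2b a s2' ∧ ∃ u, B1 s1' u ∧ B2 u s2') := by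
  intro s1 t s2 hb1 hb2 a s1' ht
  obtain ⟨tb, httb, hb1tb, hrest⟩ := h1.2 s1 t hb1 a s1' ht
  obtain ⟨s2b, h2b, hbtb⟩ := semibb_tau h2 httb s2 hb2
  rcases hrest with ⟨ha, hb1'⟩ | ⟨t', htt', hb1'⟩
  · exact ⟨s2b, h2b, ⟨tb, hb1tb, hbtb⟩, Or.inl ⟨ha, tb, hb1', hbtb⟩⟩
  · obtain ⟨s2c, hc, hbtbc, hrest2⟩ := h2.2 tb s2b hbtb a t' htt'
    rcases hrest2 with ⟨ha, hb2'⟩ | ⟨s2', hst, hb2'⟩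
    · exact ⟨s2c, Relation.ReflTransGen.trans h2b hc, ⟨tb, hb1tb, hbtbc⟩,
        Or.inl ⟨ha, t', hb1', hb2'⟩⟩
    · exact ⟨s2c, Relation.ReflTransGen.trans h2b hc, ⟨tb, hb1tb, hbtbc⟩,
        Or.inr ⟨s2', hst, t', hb1', hb2'⟩⟩

theorem sbb_trans {s t u : S} (hst : SBB tr s t) (htu : SBB tr t u) : SBB tr s u := by
  obtain ⟨B1, hB1, hb1⟩ := hst
  obtain ⟨B2, hB2, hb2⟩ := htu
  refine ⟨fun x y => (∃ v, B1 x v ∧ B2 v y) ∨ (∃ v, B1 y v ∧ B2 v x),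
    ⟨?_, ?_⟩, Or.inl ⟨t, hb1, hb2⟩⟩
  · rintro x y (⟨v, h1', h2'⟩ | ⟨v, h1', h2'⟩)
    · exact Or.inr ⟨v, h1', h2'⟩
    · exact Or.inl ⟨v, h1', h2'⟩
  · rintro s1 s2 (⟨v, h1', h2'⟩ | ⟨v, h1', h2'⟩) a s1' ht
    · obtain ⟨s2b, hts, hpair, hrest⟩ := semibb_comp hB1 hB2 s1 v s2 h1' h2' a s1' ht
      refine ⟨s2b, hts, Or.inl hpair, ?_⟩
      rcases hrest with ⟨ha, hp⟩ | ⟨s2', hst', hp⟩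
      · exact Or.inl ⟨ha, Or.inl hp⟩
      · exact Or.inr ⟨s2', hst', Or.inl hp⟩
    · obtain ⟨s2b, hts, hpair, hrest⟩ :=
        semibb_comp hB2 hB1 s1 v s2 (hB2.1 h2') (hB1.1 h1') a s1' ht
      refine ⟨s2b, hts, Or.inr ⟨?_, ?_, ?_⟩, ?_⟩
      · exact hpair.choose
      · exact hB1.1 hpair.choose_spec.2
      · exact hB2.1 hpair.choose_spec.1
      · rcases hrest with ⟨ha, v', hv1, hv2⟩ | ⟨s2', hst', v', hv1, hv2⟩
        · exact Or.inl ⟨ha, Or.inr ⟨v', hB1.1 hv2, hB2.1 hv1⟩⟩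
        · exact Or.inr ⟨s2', hst', Or.inr ⟨v', hB1.1 hv2, hB2.1 hv1⟩⟩

/-- Stuttering lemma for semi-branching bisimilarity. -/
theorem sbb_stutter {p s u s' : S} (h1 : SBB tr p s) (h2 : TauStar tr s u)
    (h3 : TauStar tr u s') (h4 : SBB tr p s') : SBB tr p u := by
  classical
  set C := SBB (S := S) tr with hC
  set E : S → S → Prop :=
    fun x y => ∃ a b, C x a ∧ TauStar tr a y ∧ TauStar tr y b ∧ C x b with hE
  refine ⟨fun x y => C x y ∨ E x y ∨ E y x, ⟨?_, ?_⟩,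
    Or.inr (Or.inl ⟨s, s', h1, h2, h3, h4⟩)⟩
  · rintro x y (h | h | h)
    · exact Or.inl (sbb_symm h)
    · exact Or.inr (Or.inr h)
    · exact Or.inr (Or.inl h)
  · rintro s1 s2 (h | ⟨a0, b0, hxa, hay, hyb, hxb⟩ | ⟨a0, b0, hya, hax, hxb, hyb⟩) a s1' ht
    · obtain ⟨s2b, hts, hp1, hrest⟩ := isSemiBB_sbb.2 s1 s2 h a s1' ht
      refine ⟨s2b, hts, Or.inl hp1, ?_⟩
      rcases hrest with ⟨ha, hp⟩ | ⟨s2', hst', hp⟩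
      · exact Or.inl ⟨ha, Or.inl hp⟩
      · exact Or.inr ⟨s2', hst', Or.inl hp⟩
    · -- pair (s1, s2) via E: C s1 b0, s2 ⟹ b0
      obtain ⟨v, hbv, hp1, hrest⟩ := isSemiBB_sbb.2 s1 b0 hxb a s1' ht
      refine ⟨v, Relation.ReflTransGen.trans hyb hbv, Or.inl hp1, ?_⟩
      rcases hrest with ⟨ha, hp⟩ | ⟨v', hv', hp⟩
      · exact Or.inl ⟨ha, Or.inl hp⟩
      · exact Or.inr ⟨v', hv', Or.inl hp⟩
    · -- pair (s1, s2) via symm E: C s2 a0, a0 ⟹ s1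
      obtain ⟨q, hsq, hq⟩ := semibb_tau isSemiBB_sbb hax s2 (sbb_symm hya)
      obtain ⟨qb, hqqb, hp1, hrest⟩ := isSemiBB_sbb.2 s1 q hq a s1' ht
      refine ⟨qb, Relation.ReflTransGen.trans hsq hqqb, Or.inl hp1, ?_⟩
      rcases hrest with ⟨ha, hp⟩ | ⟨q', hq', hp⟩
      · exact Or.inl ⟨ha, Or.inl hp⟩
      · exact Or.inr ⟨q', hq', Or.inl hp⟩

theorem isBranchingBisim_sbb : IsBranchingBisim tr (SBB tr) := by
  refine ⟨fun x y => sbb_symm, fun s1 s2 hb a s1' ht => ?_⟩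
  obtain ⟨s2b, hts, hb1, hrest⟩ := isSemiBB_sbb.2 s1 s2 hb a s1' ht
  rcases hrest with ⟨ha, hb2⟩ | ⟨s2', ht', hb2⟩
  · rcases Relation.ReflTransGen.cases_tail hts with heq | ⟨c, hc1, hc2⟩
    · subst heq; exact Or.inl ⟨ha, hb2⟩
    · subst ha
      exact Or.inr ⟨c, s2b, hc1, hc2,
        sbb_stutter hb hc1 (Relation.ReflTransGen.single hc2) hb1, hb2⟩
  · exact Or.inr ⟨s2b, s2', hts, ht', hb1, hb2⟩

theorem brBisim_iff_sbb {s t : S} : BrBisim tr s t ↔ SBB tr s t :=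
  ⟨fun ⟨B, hB, h⟩ => ⟨B, isSemiBB_of_branching hB, h⟩,
   fun h => ⟨SBB tr, isBranchingBisim_sbb, h⟩⟩

theorem brBisim_symm {s t : S} (h : BrBisim tr s t) : BrBisim tr t s :=
  brBisim_iff_sbb.mpr (sbb_symm (brBisim_iff_sbb.mp h))

theorem brBisim_trans {s t u : S} (h1 : BrBisim tr s t) (h2 : BrBisim tr t u) :
    BrBisim tr s u :=
  brBisim_iff_sbb.mpr (sbb_trans (brBisim_iff_sbb.mp h1) (brBisim_iff_sbb.mp h2))

theorem isBranchingBisim_brBisim : IsBranchingBisim tr (BrBisim tr) := by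
  refine ⟨fun x y => brBisim_symm, fun s1 s2 hb a s1' ht => ?_⟩
  rcases isBranchingBisim_sbb.2 s1 s2 (brBisim_iff_sbb.mp hb) a s1' ht with
    ⟨ha, hp⟩ | ⟨s2b, s2', h1', h2', h3', h4'⟩
  · exact Or.inl ⟨ha, brBisim_iff_sbb.mpr hp⟩
  · exact Or.inr ⟨s2b, s2', h1', h2', brBisim_iff_sbb.mpr h3', brBisim_iff_sbb.mpr h4'⟩

end BBTheory

section ProcLemmas

variable {A C : Type} {env : C → Proc A C}

theorem trans_restrict_inv {p : Proc A C} {L a s} (h : Trans env (.restrict p L) a s) :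
    ∃ p', Trans env p a p' ∧ (∀ x, a = some x → x ∉ L) ∧ s = .restrict p' L := by
  cases h with
  | res h hn => exact ⟨_, h, hn, rfl⟩

theorem trans_hide_inv {p : Proc A C} {L a s} (h : Trans env (.hide p L) a s) :
    (∃ x p', a = none ∧ Trans env p (some x) p' ∧ x ∈ L ∧ s = .hide p' L) ∨
    (∃ p', Trans env p a p' ∧ (∀ x, a = some x → x ∉ L) ∧ s = .hide p' L) := by
  cases h with
  | hideIn h hx => exact Or.inl ⟨_, _, rfl, h, hx, rfl⟩
  | hideOut h hn => exact Or.inr ⟨_, h, hn, rfl⟩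

theorem trans_par_inv {L} {p q : Proc A C} {a s} (h : Trans env (.par L p q) a s) :
    (∃ p', Trans env p a p' ∧ (∀ x, a = some x → x ∉ L) ∧ s = .par L p' q) ∨
    (∃ q', Trans env q a q' ∧ (∀ x, a = some x → x ∉ L) ∧ s = .par L p q') ∨
    (∃ x p' q', a = some x ∧ x ∈ L ∧ Trans env p (some x) p' ∧
      Trans env q (some x) q' ∧ s = .par L p' q') := by
  cases h with
  | parL h hn => exact Or.inl ⟨_, h, hn, rfl⟩
  | parR h hn => exact Or.inr (Or.inl ⟨_, h, hn, rfl⟩)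
  | sync h1 h2 hx => exact Or.inr (Or.inr ⟨_, _, _, rfl, hx, h1, h2, rfl⟩)

theorem tauStar_restrict {p p' : Proc A C} {L} (h : TauStar (Trans env) p p') :
    TauStar (Trans env) (.restrict p L) (.restrict p' L) :=
  Relation.ReflTransGen.lift (fun x => Proc.restrict x L)
    (fun _ _ (ht : Trans env _ none _) => Trans.res ht (fun _ hx => nomatch hx)) _ _ h

theorem tauStar_hide {p p' : Proc A C} {L} (h : TauStar (Trans env) p p') :
    TauStar (Trans env) (.hide p L) (.hide p' L) :=
  Relation.ReflTransGen.lift (fun x => Proc.hide x L)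
    (fun _ _ (ht : Trans env _ none _) => Trans.hideOut ht (fun _ hx => nomatch hx)) _ _ h

theorem tauStar_parL {p p' q : Proc A C} {L} (h : TauStar (Trans env) p p') :
    TauStar (Trans env) (.par L p q) (.par L p' q) :=
  Relation.ReflTransGen.lift (fun x => Proc.par L x q)
    (fun _ _ (ht : Trans env _ none _) => Trans.parL ht (fun _ hx => nomatch hx)) _ _ h

theorem tauStar_ctx {S S' Q : Proc A C} {L AH : Set A}
    (h : TauStar (Trans env) S S') :
    TauStar (Trans env) (.restrict (.hide (.par L S Q) L) AH)
      (.restrict (.hide (.par L S' Q) L) AH) :=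
  tauStar_restrict (tauStar_hide (tauStar_parL h))

theorem tauStar_restrict_inv {p : Proc A C} {L u}
    (h : TauStar (Trans env) (.restrict p L) u) :
    ∃ p', u = .restrict p' L ∧ TauStar (Trans env) p p' := by
  induction h with
  | refl => exact ⟨p, rfl, Relation.ReflTransGen.refl⟩
  | tail _ hstep ih =>
    obtain ⟨p'', rfl, hp⟩ := ih
    obtain ⟨p3, ht, _, rfl⟩ := trans_restrict_inv hstep
    exact ⟨p3, rfl, Relation.ReflTransGen.tail hp ht⟩

theorem reach_tail {p p' p'' : Proc A C} {a} (h : Reach (Trans env) p p')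
    (ht : Trans env p' a p'') : Reach (Trans env) p p'' :=
  Relation.ReflTransGen.tail h ⟨a, ht⟩

theorem tauStar_reach {p p' : Proc A C} (h : TauStar (Trans env) p p') :
    Reach (Trans env) p p' :=
  Relation.ReflTransGen.mono (fun _ _ ht => ⟨none, ht⟩) _ _ h

end ProcLemmas

section MainRel

variable {A C : Type} (env : C → Proc A C) (AH : Set A) (P2 Q : Proc A C) (L : Set A)

/-- The candidate relation for the bisimulation of Lemma 4.6(3). -/
def CtxRel (r t : Proc A C) : Prop :=
  ∃ S Q', t = .restrict (.hide (.par L S Q') L) AH ∧ Reach (Trans env) P2 S ∧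
    Reach (Trans env) Q Q' ∧ BrBisim (Trans env) r (.restrict S AH)

variable {env AH P2 Q L}

theorem ctxRel_fwd (hL : L ⊆ AH) {r t : Proc A C} (hrel : CtxRel env AH P2 Q L r t)
    {a r'} (ht : Trans env r a r') :
    (a = none ∧ CtxRel env AH P2 Q L r' t) ∨
    ∃ tb t', TauStar (Trans env) t tb ∧ Trans env tb a t' ∧
      CtxRel env AH P2 Q L r tb ∧ CtxRel env AH P2 Q L r' t' := by
  obtain ⟨S, Q', rfl, hS, hQ', hbr⟩ := hrel
  rcases isBranchingBisim_brBisim.2 _ _ hbr a r' ht with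
    ⟨ha, hb'⟩ | ⟨U, U', hτ, hU, hb1, hb2⟩
  · exact Or.inl ⟨ha, S, Q', rfl, hS, hQ', hb'⟩
  · obtain ⟨Sb, rfl, hSSb⟩ := tauStar_restrict_inv hτ
    obtain ⟨S'', hS'', hnAH, rfl⟩ := trans_restrict_inv hU
    have hnL : ∀ x, a = some x → x ∉ L := fun x hx hmem => hnAH x hx (hL hmem)
    have hreachSb : Reach (Trans env) P2 Sb :=
      Relation.ReflTransGen.trans hS (tauStar_reach hSSb)
    exact Or.inr ⟨_, _, tauStar_ctx hSSb,
      Trans.res (Trans.hideOut (Trans.parL hS'' hnL) hnL) hnAH,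
      ⟨Sb, Q', rfl, hreachSb, hQ', hb1⟩,
      ⟨S'', Q', rfl, reach_tail hreachSb hS'', hQ', hb2⟩⟩

theorem ctxRel_bwd (h2 : SBrSNNI env AH P2) (hL : L ⊆ AH) (hQ : HighOnly env AH Q)
    {r t : Proc A C} (hrel : CtxRel env AH P2 Q L r t)
    {a t'} (ht : Trans env t a t') :
    (a = none ∧ CtxRel env AH P2 Q L r t') ∨
    ∃ rb r', TauStar (Trans env) r rb ∧ Trans env rb a r' ∧
      CtxRel env AH P2 Q L rb t ∧ CtxRel env AH P2 Q L r' t' := by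
  obtain ⟨S, Q', rfl, hS, hQ', hbr⟩ := hrel
  obtain ⟨w, hw, hnAH, rfl⟩ := trans_restrict_inv ht
  rcases trans_hide_inv hw with ⟨x, w', ha, hwx, hxL, rfl⟩ | ⟨w', hw', hnL, rfl⟩
  · -- hiding of a synchronization (or a par move labelled in L): must be sync
    subst ha
    rcases trans_par_inv hwx with ⟨p', _, hn, _⟩ | ⟨q', _, hn, _⟩ |
      ⟨y, S', Q'', hy, hyL, hSx, hQx, rfl⟩
    · exact absurd hxL (hn x rfl)
    · exact absurd hxL (hn x rfl)
    · obtain ⟨rfl⟩ : y = x := by injection hy.symm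
      -- sync on x ∈ L ⊆ AH: use SBrSNNI of S
      have hsnni : BrBisim (Trans env) (.restrict S AH) (.hide S AH) := h2 S hS
      have hreachS' : Reach (Trans env) P2 S' := reach_tail hS hSx
      have hsnni' : BrBisim (Trans env) (.restrict S' AH) (.hide S' AH) :=
        h2 S' hreachS'
      have hchain : BrBisim (Trans env) (.hide S AH) r :=
        brBisim_trans (brBisim_symm hsnni) (brBisim_symm hbr)
      have hstep : Trans env (.hide S AH) none (.hide S' AH) :=
        Trans.hideIn hSx (hL hxL)
      have hQ'' : Reach (Trans env) Q Q'' := reach_tail hQ' hQx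
      rcases isBranchingBisim_brBisim.2 _ _ hchain none _ hstep with
        ⟨_, hb'⟩ | ⟨rb, r', hτ, hr, hb1, hb2⟩
      · exact Or.inl ⟨rfl, S', Q'', rfl, hreachS', hQ'',
          brBisim_trans (brBisim_symm hb') (brBisim_symm hsnni')⟩
      · exact Or.inr ⟨rb, r', hτ, hr,
          ⟨S, Q', rfl, hS, hQ', brBisim_symm (brBisim_trans hsnni hb1)⟩,
          ⟨S', Q'', rfl, hreachS', hQ'',
            brBisim_symm (brBisim_trans hsnni' hb2)⟩⟩
  · rcases trans_par_inv hw' with ⟨S', hS', _, rfl⟩ | ⟨q', hq', _, _⟩ |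
      ⟨y, _, _, hy, hyL, _, _, _⟩
    · -- low or τ move of S
      have hstep : Trans env (.restrict S AH) a (.restrict S' AH) := Trans.res hS' hnAH
      have hreachS' : Reach (Trans env) P2 S' := reach_tail hS hS'
      rcases isBranchingBisim_brBisim.2 _ _ (brBisim_symm hbr) a _ hstep with
        ⟨ha, hb'⟩ | ⟨rb, r', hτ, hr, hb1, hb2⟩
      · exact Or.inl ⟨ha, S', Q', rfl, hreachS', hQ', brBisim_symm hb'⟩
      · exact Or.inr ⟨rb, r', hτ, hr,
          ⟨S, Q', rfl, hS, hQ', brBisim_symm hb1⟩,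
          ⟨S', Q', rfl, hreachS', hQ', brBisim_symm hb2⟩⟩
    · -- Q' moves alone: impossible after restriction by AH
      obtain ⟨h, hmem, rfl⟩ := hQ Q' hQ' a q' hq'
      exact absurd hmem (hnAH h rfl)
    · exact absurd hyL (hnL y hy)

end MainRel

/-- Lemma 4.6(3). -/
theorem sbrsnni_high_context {A C : Type} (env : C → Proc A C)
    (hguard : ∀ c, Guarded (env c)) (AH : Set A) (P1 P2 : Proc A C)
    (h2 : SBrSNNI env AH P2) (L : Set A) (hL : L ⊆ AH)
    (Q : Proc A C) (hQ : HighOnly env AH Q) :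
    ∀ P1' P2' : Proc A C,
      Reach (Trans env) P1 P1' → Reach (Trans env) P2 P2' →
      BrBisim (Trans env) (Proc.restrict P1' AH) (Proc.hide P2' AH) →
      BrBisim (Trans env) (Proc.restrict P1' AH)
        (Proc.restrict (Proc.hide (Proc.par L P2' Q) L) AH) := by
  intro P1' P2' _ hreach2 hbis
  have hbr' : BrBisim (Trans env) (.restrict P1' AH) (.restrict P2' AH) :=
    brBisim_trans hbis (brBisim_symm (h2 P2' hreach2))
  refine ⟨fun x y => CtxRel env AH P2 Q L x y ∨ CtxRel env AH P2 Q L y x, ⟨?_, ?_⟩,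
    Or.inl ⟨P2', Q, rfl, hreach2, Relation.ReflTransGen.refl, hbr'⟩⟩
  · rintro x y (h | h)
    exacts [Or.inr h, Or.inl h]
  · rintro s1 s2 (h | h) a s1' ht
    · rcases ctxRel_fwd hL h ht with ⟨ha, hp⟩ | ⟨tb, t', h1', h2', h3', h4'⟩
      · exact Or.inl ⟨ha, Or.inl hp⟩
      · exact Or.inr ⟨tb, t', h1', h2', Or.inl h3', Or.inl h4'⟩
    · rcases ctxRel_bwd h2 hL hQ h ht with ⟨ha, hp⟩ | ⟨rb, r', h1', h2', h3', h4'⟩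
      · exact Or.inl ⟨ha, Or.inr hp⟩
      · exact Or.inr ⟨rb, r', h1', h2', Or.inr h3', Or.inr h4'⟩

end SecurityNI
end

section
/- Let l1, l2, l3 ∈ A_L be distinct low-level actions and h ∈ A_H. The process P = τ.(τ.l1.0 + l2.0) + h.l1.0 + l3.0 satisfies P ∈ BSNNI and P ∈ SBSNNI, but P ∉ BrSNNI and P ∉ SBrSNNI. -/
namespace SecurityNI

variable {A C : Type}

section Cex3Aux

variable {A C : Type}

/-- l1.0 -/
def cR1 (l1 : A) : Proc A C := .pre (some l1) .nil

/-- τ.l1.0 + l2.0 -/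
def cQ1 (l1 l2 : A) : Proc A C :=
  .choice (.pre none (cR1 l1)) (.pre (some l2) .nil)

/-- the counterexample process -/
def cP (l1 l2 l3 h : A) : Proc A C :=
  .choice (.pre none (cQ1 l1 l2))
    (.choice (.pre (some h) (cR1 l1)) (.pre (some l3) .nil))

variable (env : C → Proc A C)

lemma inv_pre' {b : Option A} {q : Proc A C} {a p'} (t : Trans env (.pre b q) a p') :
    a = b ∧ p' = q := by cases t; exact ⟨rfl, rfl⟩

lemma inv_nil' {a : Option A} {p' : Proc A C} (t : Trans env .nil a p') : False := by cases t

lemma inv_R1 {l1 : A} {a p'} (t : Trans env (cR1 l1) a p') :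
    a = some l1 ∧ p' = .nil := inv_pre' env t

lemma inv_Q1 {l1 l2 : A} {a p'} (t : Trans env (cQ1 l1 l2) a p') :
    (a = none ∧ p' = cR1 l1) ∨ (a = some l2 ∧ p' = .nil) := by
  cases t with
  | choiceL h => obtain ⟨rfl, rfl⟩ := inv_pre' env h; exact Or.inl ⟨rfl, rfl⟩
  | choiceR h => obtain ⟨rfl, rfl⟩ := inv_pre' env h; exact Or.inr ⟨rfl, rfl⟩

lemma inv_P {l1 l2 l3 h : A} {a p'} (t : Trans env (cP l1 l2 l3 h) a p') :
    (a = none ∧ p' = cQ1 l1 l2) ∨ (a = some h ∧ p' = cR1 l1) ∨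
      (a = some l3 ∧ p' = .nil) := by
  cases t with
  | choiceL t => obtain ⟨rfl, rfl⟩ := inv_pre' env t; exact Or.inl ⟨rfl, rfl⟩
  | choiceR t =>
    cases t with
    | choiceL t => obtain ⟨rfl, rfl⟩ := inv_pre' env t; exact Or.inr (Or.inl ⟨rfl, rfl⟩)
    | choiceR t => obtain ⟨rfl, rfl⟩ := inv_pre' env t; exact Or.inr (Or.inr ⟨rfl, rfl⟩)

lemma inv_res' {p : Proc A C} {L a p'} (t : Trans env (.restrict p L) a p') :
    ∃ q, Trans env p a q ∧ p' = .restrict q L ∧ ∀ x, a = some x → x ∉ L := by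
  cases t with
  | res t hn => exact ⟨_, t, rfl, hn⟩

lemma inv_hide' {p : Proc A C} {L a p'} (t : Trans env (.hide p L) a p') :
    ∃ q b, Trans env p b q ∧ p' = .hide q L ∧
      ((a = none ∧ ∃ x, b = some x ∧ x ∈ L) ∨ (a = b ∧ ∀ x, b = some x → x ∉ L)) := by
  cases t with
  | hideIn t hx => exact ⟨_, _, t, rfl, Or.inl ⟨rfl, _, rfl, hx⟩⟩
  | hideOut t hn => exact ⟨_, _, t, rfl, Or.inr ⟨rfl, hn⟩⟩

/-- The candidate weak bisimulation. -/
def BB (AH : Set A) (l1 l2 l3 h : A) (s t : Proc A C) : Prop :=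
  ∃ u : Proc A C,
    (u = cP l1 l2 l3 h ∨ u = cQ1 l1 l2 ∨ u = cR1 l1 ∨ u = .nil) ∧
    ((s = .restrict u AH ∧ t = .hide u AH) ∨ (s = .hide u AH ∧ t = .restrict u AH))

lemma BB_weak {AH : Set A} {l1 l2 l3 h : A}
    (hl1 : l1 ∉ AH) (hl2 : l2 ∉ AH) (hl3 : l3 ∉ AH) (hh : h ∈ AH) :
    IsWeakBisim (Trans env) (BB AH l1 l2 l3 h) := by
  constructor
  · rintro s t ⟨u, hu, hor⟩
    rcases hor with ⟨h1, h2⟩ | ⟨h1, h2⟩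
    · exact ⟨u, hu, Or.inr ⟨h2, h1⟩⟩
    · exact ⟨u, hu, Or.inl ⟨h2, h1⟩⟩
  rintro s1 s2 ⟨u, hu, hor⟩
  have hnl1 : ∀ x : A, (some l1 : Option A) = some x → x ∉ AH := by
    rintro x hx; cases hx; exact hl1
  have hnl2 : ∀ x : A, (some l2 : Option A) = some x → x ∉ AH := by
    rintro x hx; cases hx; exact hl2
  have hnl3 : ∀ x : A, (some l3 : Option A) = some x → x ∉ AH := by
    rintro x hx; cases hx; exact hl3
  have hnone : ∀ x : A, (none : Option A) = some x → x ∉ AH := by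
    rintro x hx; exact nomatch hx
  rcases hu with rfl | rfl | rfl | rfl
  · -- u = cP
    rcases hor with ⟨rfl, rfl⟩ | ⟨rfl, rfl⟩
    · constructor
      · intro s1' t
        obtain ⟨q, t2, rfl, -⟩ := inv_res' env t
        rcases inv_P env t2 with ⟨-, rfl⟩ | ⟨hc, -⟩ | ⟨hc, -⟩
        · refine ⟨.hide (cQ1 l1 l2) AH, Relation.ReflTransGen.single ?_,
            ⟨cQ1 l1 l2, Or.inr (Or.inl rfl), Or.inl ⟨rfl, rfl⟩⟩⟩
          exact Trans.hideOut (Trans.choiceL (Trans.pre _ _)) hnone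
        · exact nomatch hc
        · exact nomatch hc
      · intro x s1' t
        obtain ⟨q, t2, rfl, hn⟩ := inv_res' env t
        rcases inv_P env t2 with ⟨hc, -⟩ | ⟨hc, rfl⟩ | ⟨hc, rfl⟩
        · exact nomatch hc
        · cases hc; exact absurd hh (hn h rfl)
        · cases hc
          refine ⟨_, .hide Proc.nil AH, _, Relation.ReflTransGen.refl, ?_,
            Relation.ReflTransGen.refl, ⟨.nil, Or.inr (Or.inr (Or.inr rfl)), Or.inl ⟨rfl, rfl⟩⟩⟩
          exact Trans.hideOut (Trans.choiceR (Trans.choiceR (Trans.pre _ _))) hnl3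
    · constructor
      · intro s1' t
        obtain ⟨q, b, t2, rfl, hcase⟩ := inv_hide' env t
        rcases inv_P env t2 with ⟨rfl, rfl⟩ | ⟨rfl, rfl⟩ | ⟨rfl, rfl⟩
        · refine ⟨.restrict (cQ1 l1 l2) AH, Relation.ReflTransGen.single ?_,
            ⟨cQ1 l1 l2, Or.inr (Or.inl rfl), Or.inr ⟨rfl, rfl⟩⟩⟩
          exact Trans.res (Trans.choiceL (Trans.pre _ _)) hnone
        · refine ⟨.restrict (cR1 l1) AH, ?_,
            ⟨cR1 l1, Or.inr (Or.inr (Or.inl rfl)), Or.inr ⟨rfl, rfl⟩⟩⟩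
          exact Relation.ReflTransGen.tail
            (Relation.ReflTransGen.single
              (Trans.res (Trans.choiceL (Trans.pre _ _)) hnone))
            (Trans.res (Trans.choiceL (Trans.pre _ _)) hnone)
        · rcases hcase with ⟨-, x, hx, hmem⟩ | ⟨hc, hn⟩
          · cases hx; exact absurd hmem hl3
          · exact nomatch hc
      · intro x s1' t
        obtain ⟨q, b, t2, rfl, hcase⟩ := inv_hide' env t
        rcases hcase with ⟨hc, -⟩ | ⟨rfl, hn⟩
        · exact nomatch hc
        rcases inv_P env t2 with ⟨hc, -⟩ | ⟨hc, rfl⟩ | ⟨hc, rfl⟩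
        · exact nomatch hc
        · cases hc; exact absurd hh (hn h rfl)
        · cases hc
          refine ⟨_, .restrict Proc.nil AH, _, Relation.ReflTransGen.refl, ?_,
            Relation.ReflTransGen.refl, ⟨.nil, Or.inr (Or.inr (Or.inr rfl)), Or.inr ⟨rfl, rfl⟩⟩⟩
          exact Trans.res (Trans.choiceR (Trans.choiceR (Trans.pre _ _))) hnl3
  · -- u = cQ1
    rcases hor with ⟨rfl, rfl⟩ | ⟨rfl, rfl⟩
    · constructor
      · intro s1' t
        obtain ⟨q, t2, rfl, -⟩ := inv_res' env t
        rcases inv_Q1 env t2 with ⟨-, rfl⟩ | ⟨hc, -⟩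
        · refine ⟨.hide (cR1 l1) AH, Relation.ReflTransGen.single ?_,
            ⟨cR1 l1, Or.inr (Or.inr (Or.inl rfl)), Or.inl ⟨rfl, rfl⟩⟩⟩
          exact Trans.hideOut (Trans.choiceL (Trans.pre _ _)) hnone
        · exact nomatch hc
      · intro x s1' t
        obtain ⟨q, t2, rfl, hn⟩ := inv_res' env t
        rcases inv_Q1 env t2 with ⟨hc, -⟩ | ⟨hc, rfl⟩
        · exact nomatch hc
        · cases hc
          refine ⟨_, .hide Proc.nil AH, _, Relation.ReflTransGen.refl, ?_,
            Relation.ReflTransGen.refl, ⟨.nil, Or.inr (Or.inr (Or.inr rfl)), Or.inl ⟨rfl, rfl⟩⟩⟩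
          exact Trans.hideOut (Trans.choiceR (Trans.pre _ _)) hnl2
    · constructor
      · intro s1' t
        obtain ⟨q, b, t2, rfl, hcase⟩ := inv_hide' env t
        rcases inv_Q1 env t2 with ⟨rfl, rfl⟩ | ⟨rfl, rfl⟩
        · refine ⟨.restrict (cR1 l1) AH, Relation.ReflTransGen.single ?_,
            ⟨cR1 l1, Or.inr (Or.inr (Or.inl rfl)), Or.inr ⟨rfl, rfl⟩⟩⟩
          exact Trans.res (Trans.choiceL (Trans.pre _ _)) hnone
        · rcases hcase with ⟨-, x, hx, hmem⟩ | ⟨hc, -⟩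
          · cases hx; exact absurd hmem hl2
          · exact nomatch hc
      · intro x s1' t
        obtain ⟨q, b, t2, rfl, hcase⟩ := inv_hide' env t
        rcases hcase with ⟨hc, -⟩ | ⟨rfl, hn⟩
        · exact nomatch hc
        rcases inv_Q1 env t2 with ⟨hc, -⟩ | ⟨hc, rfl⟩
        · exact nomatch hc
        · cases hc
          refine ⟨_, .restrict Proc.nil AH, _, Relation.ReflTransGen.refl, ?_,
            Relation.ReflTransGen.refl, ⟨.nil, Or.inr (Or.inr (Or.inr rfl)), Or.inr ⟨rfl, rfl⟩⟩⟩
          exact Trans.res (Trans.choiceR (Trans.pre _ _)) hnl2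
  · -- u = cR1
    rcases hor with ⟨rfl, rfl⟩ | ⟨rfl, rfl⟩
    · constructor
      · intro s1' t
        obtain ⟨q, t2, rfl, -⟩ := inv_res' env t
        obtain ⟨hc, -⟩ := inv_R1 env t2
        exact nomatch hc
      · intro x s1' t
        obtain ⟨q, t2, rfl, hn⟩ := inv_res' env t
        obtain ⟨hc, rfl⟩ := inv_R1 env t2
        cases hc
        refine ⟨_, .hide Proc.nil AH, _, Relation.ReflTransGen.refl, ?_,
          Relation.ReflTransGen.refl, ⟨.nil, Or.inr (Or.inr (Or.inr rfl)), Or.inl ⟨rfl, rfl⟩⟩⟩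
        exact Trans.hideOut (Trans.pre _ _) hnl1
    · constructor
      · intro s1' t
        obtain ⟨q, b, t2, rfl, hcase⟩ := inv_hide' env t
        obtain ⟨rfl, rfl⟩ := inv_R1 env t2
        rcases hcase with ⟨-, x, hx, hmem⟩ | ⟨hc, -⟩
        · cases hx; exact absurd hmem hl1
        · exact nomatch hc
      · intro x s1' t
        obtain ⟨q, b, t2, rfl, hcase⟩ := inv_hide' env t
        rcases hcase with ⟨hc, -⟩ | ⟨rfl, -⟩
        · exact nomatch hc
        obtain ⟨hc, rfl⟩ := inv_R1 env t2
        cases hc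
        refine ⟨_, .restrict Proc.nil AH, _, Relation.ReflTransGen.refl, ?_,
          Relation.ReflTransGen.refl, ⟨.nil, Or.inr (Or.inr (Or.inr rfl)), Or.inr ⟨rfl, rfl⟩⟩⟩
        exact Trans.res (Trans.pre _ _) hnl1
  · -- u = nil
    rcases hor with ⟨rfl, rfl⟩ | ⟨rfl, rfl⟩ <;> constructor
    · intro s1' t
      obtain ⟨q, t2, -, -⟩ := inv_res' env t
      exact absurd t2 (fun t => inv_nil' env t)
    · intro x s1' t
      obtain ⟨q, t2, -, -⟩ := inv_res' env t
      exact absurd t2 (fun t => inv_nil' env t)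
    · intro s1' t
      obtain ⟨q, b, t2, -, -⟩ := inv_hide' env t
      exact absurd t2 (fun t => inv_nil' env t)
    · intro x s1' t
      obtain ⟨q, b, t2, -, -⟩ := inv_hide' env t
      exact absurd t2 (fun t => inv_nil' env t)

lemma tauStar_res_P {AH : Set A} {l1 l2 l3 h : A} {s : Proc A C}
    (hs : TauStar (Trans env) (.restrict (cP l1 l2 l3 h) AH) s) :
    s = .restrict (cP l1 l2 l3 h) AH ∨ s = .restrict (cQ1 l1 l2) AH ∨
      s = .restrict (cR1 l1) AH := by
  induction hs with
  | refl => exact Or.inl rfl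
  | tail _ step ih =>
    rcases ih with rfl | rfl | rfl
    · obtain ⟨q, t2, rfl, -⟩ := inv_res' env step
      rcases inv_P env t2 with ⟨-, rfl⟩ | ⟨hc, -⟩ | ⟨hc, -⟩
      · exact Or.inr (Or.inl rfl)
      · exact nomatch hc
      · exact nomatch hc
    · obtain ⟨q, t2, rfl, -⟩ := inv_res' env step
      rcases inv_Q1 env t2 with ⟨-, rfl⟩ | ⟨hc, -⟩
      · exact Or.inr (Or.inr rfl)
      · exact nomatch hc
    · obtain ⟨q, t2, rfl, -⟩ := inv_res' env step
      obtain ⟨hc, -⟩ := inv_R1 env t2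
      exact nomatch hc

lemma tauStar_res_Q1 {AH : Set A} {l1 l2 : A} {s : Proc A C}
    (hs : TauStar (Trans env) (.restrict (cQ1 l1 l2) AH) s) :
    s = .restrict (cQ1 l1 l2) AH ∨ s = .restrict (cR1 l1) AH := by
  induction hs with
  | refl => exact Or.inl rfl
  | tail _ step ih =>
    rcases ih with rfl | rfl
    · obtain ⟨q, t2, rfl, -⟩ := inv_res' env step
      rcases inv_Q1 env t2 with ⟨-, rfl⟩ | ⟨hc, -⟩
      · exact Or.inr rfl
      · exact nomatch hc
    · obtain ⟨q, t2, rfl, -⟩ := inv_res' env step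
      obtain ⟨hc, -⟩ := inv_R1 env t2
      exact nomatch hc

lemma tauStar_hide_R1 {AH : Set A} {l1 : A} (hl1 : l1 ∉ AH) {s : Proc A C}
    (hs : TauStar (Trans env) (.hide (cR1 l1) AH) s) :
    s = .hide (cR1 l1) AH := by
  induction hs with
  | refl => rfl
  | tail _ step ih =>
    subst ih
    obtain ⟨q, b, t2, rfl, hcase⟩ := inv_hide' env step
    obtain ⟨rfl, rfl⟩ := inv_R1 env t2
    rcases hcase with ⟨-, x, hx, hmem⟩ | ⟨hc, -⟩
    · cases hx; exact absurd hmem hl1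
    · exact nomatch hc

/-- Transitions of `hide (cR1 l1) AH` can only be `some l1`. -/
lemma hide_R1_no {AH : Set A} {l1 : A} (hl1 : l1 ∉ AH) {a : Option A} {t' : Proc A C}
    (hstep : Trans env (.hide (cR1 l1) AH) a t') : a = some l1 := by
  obtain ⟨q, b, t2, -, hcase⟩ := inv_hide' env hstep
  obtain ⟨rfl, -⟩ := inv_R1 env t2
  rcases hcase with ⟨-, x, hx, hmem⟩ | ⟨rfl, -⟩
  · cases hx; exact absurd hmem hl1
  · rfl

lemma reach_P {l1 l2 l3 h : A} {p' : Proc A C}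
    (hr : Reach (Trans env) (cP l1 l2 l3 h) p') :
    p' = cP l1 l2 l3 h ∨ p' = cQ1 l1 l2 ∨ p' = cR1 l1 ∨ p' = .nil := by
  induction hr with
  | refl => exact Or.inl rfl
  | tail _ step ih =>
    obtain ⟨a, step⟩ := step
    rcases ih with rfl | rfl | rfl | rfl
    · rcases inv_P env step with ⟨-, rfl⟩ | ⟨-, rfl⟩ | ⟨-, rfl⟩
      · exact Or.inr (Or.inl rfl)
      · exact Or.inr (Or.inr (Or.inl rfl))
      · exact Or.inr (Or.inr (Or.inr rfl))
    · rcases inv_Q1 env step with ⟨-, rfl⟩ | ⟨-, rfl⟩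
      · exact Or.inr (Or.inr (Or.inl rfl))
      · exact Or.inr (Or.inr (Or.inr rfl))
    · obtain ⟨-, rfl⟩ := inv_R1 env step
      exact Or.inr (Or.inr (Or.inr rfl))
    · exact absurd step (fun t => inv_nil' env t)

end Cex3Aux

/-- the process τ.(τ.l1.0 + l2.0) + h.l1.0 + l3.0 is BSNNI and
SBSNNI but neither BrSNNI nor SBrSNNI. -/
theorem cex_tau_axiom_3 {A C : Type} (env : C → Proc A C)
    (hguard : ∀ c, Guarded (env c)) (AH : Set A)
    (l1 l2 l3 : A) (hl1 : l1 ∉ AH) (hl2 : l2 ∉ AH) (hl3 : l3 ∉ AH)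
    (h12 : l1 ≠ l2) (h13 : l1 ≠ l3) (h23 : l2 ≠ l3)
    (h : A) (hh : h ∈ AH) :
    ∀ P : Proc A C,
      P = Proc.choice
            (Proc.pre none
              (Proc.choice (Proc.pre none (Proc.pre (some l1) Proc.nil))
                           (Proc.pre (some l2) Proc.nil)))
            (Proc.choice (Proc.pre (some h) (Proc.pre (some l1) Proc.nil))
                         (Proc.pre (some l3) Proc.nil)) →
      BSNNI env AH P ∧ SBSNNI env AH P ∧ ¬ BrSNNI env AH P ∧ ¬ SBrSNNI env AH P := by
  intro P hP
  have hPdef : P = cP l1 l2 l3 h := hP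
  subst hPdef
  have hbsnni : BSNNI env AH (cP l1 l2 l3 h) :=
    ⟨BB AH l1 l2 l3 h, BB_weak env hl1 hl2 hl3 hh,
      ⟨cP l1 l2 l3 h, Or.inl rfl, Or.inl ⟨rfl, rfl⟩⟩⟩
  have hnotbr : ¬ BrSNNI env AH (cP l1 l2 l3 h) := by
    rintro ⟨B, ⟨hsym, hmove⟩, hB⟩
    -- notation: s1 = P∖AH, t1 = P/AH etc.
    have hB' : B (.hide (cP l1 l2 l3 h) AH) (.restrict (cP l1 l2 l3 h) AH) := hsym hB
    -- the hidden high transition P/AH --τ--> (l1.0)/AH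
    have step0 : Trans env (.hide (cP l1 l2 l3 h) AH) none (.hide (cR1 l1) AH) :=
      Trans.hideIn (Trans.choiceR (Trans.choiceL (Trans.pre _ _))) hh
    have hnl3 : ∀ x : A, (some l3 : Option A) = some x → x ∉ AH := by
      rintro x hx; cases hx; exact hl3
    have hnl2 : ∀ x : A, (some l2 : Option A) = some x → x ∉ AH := by
      rintro x hx; cases hx; exact hl2
    rcases hmove _ _ hB' none _ step0 with ⟨-, hB1⟩ | ⟨sb, s', hts, hstep, hBb, hB2⟩
    · -- case 1 : B ((l1.0)/AH) (P∖AH)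
      have stepl3 : Trans env (.restrict (cP l1 l2 l3 h) AH) (some l3) (.restrict .nil AH) :=
        Trans.res (Trans.choiceR (Trans.choiceR (Trans.pre _ _))) hnl3
      rcases hmove _ _ (hsym hB1) (some l3) _ stepl3 with ⟨hc, -⟩ | ⟨tb, t', hts', hstep', -, -⟩
      · exact nomatch hc
      · have := tauStar_hide_R1 env hl1 hts'
        subst this
        have := hide_R1_no env hl1 hstep'
        cases this
        exact h13 rfl
    · -- case 2
      rcases tauStar_res_P env hts with rfl | rfl | rfl
      · -- sb = P∖AH, so s' = Q1∖AH
        obtain ⟨q, t2, rfl, -⟩ := inv_res' env hstep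
        have hq : q = cQ1 l1 l2 := by
          rcases inv_P env t2 with ⟨-, rfl⟩ | ⟨hc, -⟩ | ⟨hc, -⟩
          · rfl
          · exact nomatch hc
          · exact nomatch hc
        subst hq
        -- hB2 : B ((l1.0)/AH) (Q1∖AH); but Q1∖AH does l2
        have stepl2 : Trans env (.restrict (cQ1 l1 l2) AH) (some l2) (.restrict .nil AH) :=
          Trans.res (Trans.choiceR (Trans.pre _ _)) hnl2
        rcases hmove _ _ (hsym hB2) (some l2) _ stepl2 with ⟨hc, -⟩ | ⟨tb, t', hts', hstep', -, -⟩
        · exact nomatch hc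
        · have := tauStar_hide_R1 env hl1 hts'
          subst this
          have := hide_R1_no env hl1 hstep'
          cases this
          exact h12 rfl
      · -- sb = Q1∖AH ; hBb : B (P/AH) (Q1∖AH); but P/AH does l3
        have stepl3 : Trans env (.hide (cP l1 l2 l3 h) AH) (some l3) (.hide .nil AH) :=
          Trans.hideOut (Trans.choiceR (Trans.choiceR (Trans.pre _ _))) hnl3
        rcases hmove _ _ hBb (some l3) _ stepl3 with ⟨hc, -⟩ | ⟨tb, t', hts', hstep', -, -⟩
        · exact nomatch hc
        · rcases tauStar_res_Q1 env hts' with rfl | rfl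
          · obtain ⟨q, t2, -, -⟩ := inv_res' env hstep'
            rcases inv_Q1 env t2 with ⟨hc, -⟩ | ⟨hc, -⟩
            · exact nomatch hc
            · cases hc; exact h23 rfl
          · obtain ⟨q, t2, -, -⟩ := inv_res' env hstep'
            obtain ⟨hc, -⟩ := inv_R1 env t2
            cases hc; exact h13 rfl
      · -- sb = R1∖AH has no τ transition
        obtain ⟨q, t2, -, -⟩ := inv_res' env hstep
        obtain ⟨hc, -⟩ := inv_R1 env t2
        exact nomatch hc
  refine ⟨hbsnni, ?_, hnotbr, ?_⟩
  · intro p' hr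
    rcases reach_P env hr with rfl | rfl | rfl | rfl
    · exact hbsnni
    · exact ⟨BB AH l1 l2 l3 h, BB_weak env hl1 hl2 hl3 hh,
        ⟨cQ1 l1 l2, Or.inr (Or.inl rfl), Or.inl ⟨rfl, rfl⟩⟩⟩
    · exact ⟨BB AH l1 l2 l3 h, BB_weak env hl1 hl2 hl3 hh,
        ⟨cR1 l1, Or.inr (Or.inr (Or.inl rfl)), Or.inl ⟨rfl, rfl⟩⟩⟩
    · exact ⟨BB AH l1 l2 l3 h, BB_weak env hl1 hl2 hl3 hh,
        ⟨.nil, Or.inr (Or.inr (Or.inr rfl)), Or.inl ⟨rfl, rfl⟩⟩⟩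
  · intro hs
    exact hnotbr (hs _ Relation.ReflTransGen.refl)

end SecurityNI
end

section
/- If B is a branching bisimulation up to ≈_b and (P1, P2) ∈ B, then P1 ≈_b P2; in particular, the composed relation ≈_b ∘ B ∘ ≈_b is a branching bisimulation. -/
/-!
Following Basten, call a symmetric relation a semi-branching bisimulation if a τ-step
`s --τ→ s'` may also be answered by a τ-path `t ⟹ m` with `m` related to both `s` and `s'`.
Semi-branching bisimulations are closed under composition, so semi-branching bisimilarity is
transitive; it also has the stuttering property, and these two facts show that every
semi-branching bisimulation that absorbs semi-branching bisimilarity on the right is already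
branching (the last state before `m` on the τ-path gives the branching answer). Hence
semi-branching and branching bisimilarity coincide and `≈_b` is an equivalence. The relation
`≈_b ∘ B ∘ ≈_b` is then a semi-branching bisimulation, since the up-to clause only has to be
transported along `≈_b` on both sides; it absorbs `≈_b`, so it is a branching bisimulation,
and it contains `B`.
-/

namespace SecurityNI

variable {A C : Type}

/-- The composition `≈_b ∘ B ∘ ≈_b`. -/
def UpToComp {S A : Type} (tr : S → Option A → S → Prop) (B : S → S → Prop)
    (s t : S) : Prop :=
  ∃ u v, BrBisim tr s u ∧ B u v ∧ BrBisim tr v t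

/-- `B` is a branching bisimulation up to `≈_b`. -/
def IsBranchingBisimUpTo {S A : Type} (tr : S → Option A → S → Prop)
    (B : S → S → Prop) : Prop :=
  Symmetric B ∧
    ∀ P1 P2, B P1 P2 →
      ∀ Pb1 a P1', TauStar tr P1 Pb1 → BrBisim tr P1 Pb1 → tr Pb1 a P1' →
        (a = none ∧ BrBisim tr Pb1 P1') ∨
        (∃ Pb2 P2', TauStar tr P2 Pb2 ∧ tr Pb2 a P2' ∧
          UpToComp tr B Pb1 Pb2 ∧ UpToComp tr B P1' P2')

section SemiBranching

variable {S A : Type} {tr : S → Option A → S → Prop} {B B₁ B₂ R : S → S → Prop}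

variable (tr) in
def SemiBranchingMatch (B : S → S → Prop) (s : S) (a : Option A) (s' t : S) : Prop :=
  (a = none ∧ ∃ m, TauStar tr t m ∧ B s m ∧ B s' m) ∨
    ∃ tb t', TauStar tr t tb ∧ tr tb a t' ∧ B s tb ∧ B s' t'

variable (tr) in
def IsSemiBranchingBisim (B : S → S → Prop) : Prop :=
  Symmetric B ∧ ∀ s t, B s t → ∀ a s', tr s a s' → SemiBranchingMatch tr B s a s' t

variable (tr) in
def SemiBrBisim (s t : S) : Prop :=
  ∃ B, IsSemiBranchingBisim tr B ∧ B s t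

namespace SemiBranchingMatch

variable {s s' t c c' : S} {a : Option A}

lemma mono (h : SemiBranchingMatch tr B s a s' t) (hBR : B ≤ R) :
    SemiBranchingMatch tr R s a s' t := by
  rcases h with ⟨ha, m, htm, hsm, hs'm⟩ | ⟨tb, t', httb, htb, hstb, hs't'⟩
  · exact Or.inl ⟨ha, m, htm, hBR _ _ hsm, hBR _ _ hs'm⟩
  · exact Or.inr ⟨tb, t', httb, htb, hBR _ _ hstb, hBR _ _ hs't'⟩

lemma of_tauStar {t₀ : S} (ht : TauStar tr t₀ t) (h : SemiBranchingMatch tr B s a s' t) :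
    SemiBranchingMatch tr B s a s' t₀ := by
  rcases h with ⟨ha, m, htm, hsm, hs'm⟩ | ⟨tb, t', httb, htb, hstb, hs't'⟩
  · exact Or.inl ⟨ha, m, ht.trans htm, hsm, hs'm⟩
  · exact Or.inr ⟨tb, t', ht.trans httb, htb, hstb, hs't'⟩

lemma comp_left (h : SemiBranchingMatch tr B₂ c a c' t) (hsc : B₁ s c) (hs'c' : B₁ s' c') :
    SemiBranchingMatch tr (Relation.Comp B₁ B₂) s a s' t := by
  rcases h with ⟨ha, m, htm, hcm, hc'm⟩ | ⟨tb, t', httb, htb, hctb, hc't'⟩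
  · exact Or.inl ⟨ha, m, htm, ⟨c, hsc, hcm⟩, ⟨c', hs'c', hc'm⟩⟩
  · exact Or.inr ⟨tb, t', httb, htb, ⟨c, hsc, hctb⟩, ⟨c', hs'c', hc't'⟩⟩

end SemiBranchingMatch

lemma IsBranchingBisim.isSemiBranchingBisim (hB : IsBranchingBisim tr B) :
    IsSemiBranchingBisim tr B := by
  refine ⟨hB.1, fun s t hst a s' hs => ?_⟩
  rcases hB.2 s t hst a s' hs with ⟨ha, hs't⟩ | hstep
  · exact Or.inl ⟨ha, t, .refl, hst, hs't⟩
  · exact Or.inr hstep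

namespace IsSemiBranchingBisim

lemma le_semiBrBisim (hB : IsSemiBranchingBisim tr B) : B ≤ SemiBrBisim tr :=
  fun _ _ h => ⟨B, hB, h⟩

lemma exists_tauStar (hB : IsSemiBranchingBisim tr B) {u u' t : S} (hut : B u t)
    (hu : TauStar tr u u') : ∃ t', TauStar tr t t' ∧ B u' t' := by
  induction hu with
  | refl => exact ⟨t, .refl, hut⟩
  | tail _ hstep ih =>
    obtain ⟨t₁, htt₁, hB₁⟩ := ih
    rcases hB.2 _ _ hB₁ none _ hstep with ⟨-, m, ht₁m, -, hm⟩ | ⟨t₂, t₃, ht₁t₂, ht₂t₃, -, hB₃⟩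
    · exact ⟨m, htt₁.trans ht₁m, hm⟩
    · exact ⟨t₃, (htt₁.trans ht₁t₂).tail ht₂t₃, hB₃⟩

lemma match_comp (hB₂ : IsSemiBranchingBisim tr B₂) {s s' c t : S} {a : Option A}
    (h : SemiBranchingMatch tr B₁ s a s' c) (hct : B₂ c t) :
    SemiBranchingMatch tr (Relation.Comp B₁ B₂) s a s' t := by
  rcases h with ⟨ha, m, hcm, hsm, hs'm⟩ | ⟨cb, c', hccb, hcb, hscb, hs'c'⟩
  · obtain ⟨tm, httm, hmtm⟩ := hB₂.exists_tauStar hct hcm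
    exact Or.inl ⟨ha, tm, httm, ⟨m, hsm, hmtm⟩, ⟨m, hs'm, hmtm⟩⟩
  · obtain ⟨tb, httb, hcbtb⟩ := hB₂.exists_tauStar hct hccb
    exact ((hB₂.2 cb tb hcbtb a c' hcb).comp_left hscb hs'c').of_tauStar httb

lemma comp_self (hB : IsSemiBranchingBisim tr B) :
    IsSemiBranchingBisim tr (Relation.Comp B B) :=
  ⟨fun _ _ ⟨c, hsc, hct⟩ => ⟨c, hB.1 hct, hB.1 hsc⟩,
    fun s _ ⟨c, hsc, hct⟩ a s' hs => hB.match_comp (hB.2 s c hsc a s' hs) hct⟩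

end IsSemiBranchingBisim

namespace SemiBrBisim

lemma symm {s t : S} (h : SemiBrBisim tr s t) : SemiBrBisim tr t s :=
  let ⟨B, hB, hst⟩ := h
  ⟨B, hB, hB.1 hst⟩

lemma isSemiBranchingBisim : IsSemiBranchingBisim tr (SemiBrBisim tr) := by
  refine ⟨fun _ _ => symm, ?_⟩
  rintro s t ⟨B, hB, hst⟩ a s' hs
  exact (hB.2 s t hst a s' hs).mono hB.le_semiBrBisim

lemma trans {s c t : S} (hsc : SemiBrBisim tr s c) (hct : SemiBrBisim tr c t) :
    SemiBrBisim tr s t :=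
  isSemiBranchingBisim.comp_self.le_semiBrBisim _ _ ⟨c, hsc, hct⟩

lemma of_tauStar_of_tauStar {s t₀ c t₁ : S} (h₀ : TauStar tr t₀ c) (h₁ : TauStar tr c t₁)
    (hs₀ : SemiBrBisim tr s t₀) (hs₁ : SemiBrBisim tr s t₁) : SemiBrBisim tr s c := by
  let M : S → S → Prop := fun x y =>
    ∃ y₀ y₁, TauStar tr y₀ y ∧ TauStar tr y y₁ ∧ SemiBrBisim tr x y₀ ∧ SemiBrBisim tr x y₁
  have hM : SemiBrBisim tr ≤ fun x y => M x y ∨ M y x :=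
    fun _ y h => Or.inl ⟨y, y, .refl, .refl, h, h⟩
  have hMM : IsSemiBranchingBisim tr fun x y => M x y ∨ M y x := by
    refine ⟨fun _ _ => Or.symm, ?_⟩
    rintro x y (⟨-, y₁, -, hyy₁, -, hxy₁⟩ | ⟨x₀, -, hx₀x, -, hyx₀, -⟩) a x' hx
    · exact ((isSemiBranchingBisim.2 x y₁ hxy₁ a x' hx).mono hM).of_tauStar hyy₁
    · obtain ⟨y', hyy', hxy'⟩ := isSemiBranchingBisim.exists_tauStar hyx₀.symm hx₀x
      exact ((isSemiBranchingBisim.2 x y' hxy' a x' hx).mono hM).of_tauStar hyy'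
  exact hMM.le_semiBrBisim _ _ (Or.inl ⟨t₀, t₁, h₀, h₁, hs₀, hs₁⟩)

end SemiBrBisim

lemma IsSemiBranchingBisim.isBranchingBisim (hR : IsSemiBranchingBisim tr R)
    (hR_comp : ∀ s t u, R s t → SemiBrBisim tr t u → R s u) : IsBranchingBisim tr R := by
  refine ⟨hR.1, fun s t hst a s' hs => ?_⟩
  rcases hR.2 s t hst a s' hs with ⟨rfl, m, htm, hsm, hs'm⟩ | hstep
  · rcases Relation.ReflTransGen.cases_tail htm with rfl | ⟨c, htc, hcm⟩
    · exact Or.inl ⟨rfl, hs'm⟩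
    · have hsc : SemiBrBisim tr s c := .of_tauStar_of_tauStar htc (.single hcm)
        (hR.le_semiBrBisim _ _ hst) (hR.le_semiBrBisim _ _ hsm)
      exact Or.inr ⟨c, m, htc, hcm, hR_comp s t c hst ((hR.le_semiBrBisim _ _ hst).symm.trans hsc),
        hs'm⟩
  · exact Or.inr hstep

lemma SemiBrBisim.isBranchingBisim : IsBranchingBisim tr (SemiBrBisim tr) :=
  isSemiBranchingBisim.isBranchingBisim fun _ _ _ => trans

lemma brBisim_eq_semiBrBisim : BrBisim tr = SemiBrBisim tr :=
  funext₂ fun _ _ => propext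
    ⟨fun ⟨_, hB, hst⟩ => hB.isSemiBranchingBisim.le_semiBrBisim _ _ hst,
      fun h => ⟨_, SemiBrBisim.isBranchingBisim, h⟩⟩

end SemiBranching

namespace BrBisim

variable {S A : Type} {tr : S → Option A → S → Prop}

lemma isBranchingBisim : IsBranchingBisim tr (BrBisim tr) :=
  brBisim_eq_semiBrBisim ▸ SemiBrBisim.isBranchingBisim

lemma refl (s : S) : BrBisim tr s s := by
  refine ⟨Eq, ⟨fun _ _ => Eq.symm, ?_⟩, rfl⟩
  rintro s _ rfl a s' hs
  exact Or.inr ⟨s, s', .refl, hs, rfl, rfl⟩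

lemma symm {s t : S} (h : BrBisim tr s t) : BrBisim tr t s :=
  isBranchingBisim.1 h

lemma trans {s c t : S} (hsc : BrBisim tr s c) (hct : BrBisim tr c t) : BrBisim tr s t := by
  rw [brBisim_eq_semiBrBisim] at *
  exact hsc.trans hct

end BrBisim

namespace UpToComp

variable {S A : Type} {tr : S → Option A → S → Prop} {B : S → S → Prop} {s s₀ t t₀ : S}

lemma brBisim_left (hs : BrBisim tr s s₀) (h : UpToComp tr B s₀ t) : UpToComp tr B s t :=
  let ⟨u, v, hs₀u, huv, hvt⟩ := h
  ⟨u, v, hs.trans hs₀u, huv, hvt⟩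

lemma brBisim_right (h : UpToComp tr B s t₀) (ht : BrBisim tr t₀ t) : UpToComp tr B s t :=
  let ⟨u, v, hsu, huv, hvt₀⟩ := h
  ⟨u, v, hsu, huv, hvt₀.trans ht⟩

lemma isSemiBranchingBisim (hB : IsBranchingBisimUpTo tr B) :
    IsSemiBranchingBisim tr (UpToComp tr B) := by
  refine ⟨fun _ _ ⟨u, v, hsu, huv, hvt⟩ => ⟨v, u, hvt.symm, hB.1 huv, hsu.symm⟩, ?_⟩
  rintro s t hst a s' hs
  obtain ⟨u, v, hsu, huv, hvt⟩ := hst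
  rcases BrBisim.isBranchingBisim.2 s u hsu a s' hs with
    ⟨rfl, hs'u⟩ | ⟨ub, u', huub, hub, hsub, hs'u'⟩
  · exact Or.inl ⟨rfl, t, .refl, ⟨u, v, hsu, huv, hvt⟩, ⟨u, v, hs'u, huv, hvt⟩⟩
  rcases hB.2 u v huv ub a u' huub (hsu.symm.trans hsub) hub with ⟨rfl, hubu'⟩ | hmatch
  · have hs'u : BrBisim tr s' u := hs'u'.trans (hubu'.symm.trans (hsub.symm.trans hsu))
    exact Or.inl ⟨rfl, t, .refl, ⟨u, v, hsu, huv, hvt⟩, ⟨u, v, hs'u, huv, hvt⟩⟩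
  · have hmatch_t := (BrBisim.isBranchingBisim.isSemiBranchingBisim.match_comp
      (Or.inr hmatch) hvt).mono fun _ _ ⟨_, hxy, hyz⟩ => hxy.brBisim_right hyz
    exact (hmatch_t.comp_left hsub hs'u').mono fun _ _ ⟨_, hxy, hyz⟩ => hyz.brBisim_left hxy

end UpToComp

/-- soundness of the up-to technique: if `B` is a branching
bisimulation up to `≈_b` and `(P1,P2) ∈ B`, then `P1 ≈_b P2`; in particular
`≈_b ∘ B ∘ ≈_b` is a branching bisimulation. -/
theorem branching_bisim_up_to_sound {S A : Type} (tr : S → Option A → S → Prop)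
    (B : S → S → Prop) (hB : IsBranchingBisimUpTo tr B)
    (P1 P2 : S) (h : B P1 P2) :
    BrBisim tr P1 P2 ∧ IsBranchingBisim tr (UpToComp tr B) := by
  have hR : IsBranchingBisim tr (UpToComp tr B) :=
    (UpToComp.isSemiBranchingBisim hB).isBranchingBisim fun _ _ _ hst htu =>
      hst.brBisim_right (brBisim_eq_semiBrBisim ▸ htu)
  exact ⟨⟨_, hR, P1, P2, .refl P1, h, .refl P2⟩, hR⟩

end SecurityNI
end
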